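/- If the transportation polytopes 𝒞(P_1,Q_1) and 𝒞(P_2,Q_2) are geometrically equivalent, then the I-projection from 𝒞(P_2,Q_2) to 𝒞(P_1,Q_1) is a two-sided inverse of the I-projection from 𝒞(P_1,Q_1) to 𝒞(P_2,Q_2): for all S ∈ 𝒞(P_1,Q_1), I_proj_{21}(I_proj_{12}(S)) = S. -/

import Mathlib

open Finset Filter Topology

def IsProbVec {n : ℕ} (P : Fin n → ℝ) : Prop :=
  (∀ i, 0 ≤ P i) ∧ ∑ i, P i = 1

def supp {α : Type*} (P : α → ℝ) : Set α := {i | 0 < P i}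

def supp2 {n m : ℕ} (S : Fin n → Fin m → ℝ) : Set (Fin n × Fin m) :=
  {p | 0 < S p.1 p.2}

def Coupling {n m : ℕ} (P : Fin n → ℝ) (Q : Fin m → ℝ) : Set (Fin n → Fin m → ℝ) :=
  {S | (∀ i j, 0 ≤ S i j) ∧ (∀ i, ∑ j, S i j = P i) ∧ (∀ j, ∑ i, S i j = Q j)}

/-- Kullback-Leibler divergence of bivariate distributions, as a real-valued sum
(valid, with the convention `0 log 0 = 0`, whenever `supp2 T ⊆ supp2 S`). -/
noncomputable def D2 {n m : ℕ} (T S : Fin n → Fin m → ℝ) : ℝ :=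
  ∑ i, ∑ j, T i j * Real.log (T i j / S i j)

/-- `T'` is an I-projection of `S` onto `𝒯`: it is absolutely continuous w.r.t. `S`
(equivalently, `D(T'‖S) < ∞`) and minimizes the divergence among all such elements of `𝒯`
(elements with `¬ supp2 T ⊆ supp2 S` have infinite divergence). -/
def IsIProj {n m : ℕ} (S : Fin n → Fin m → ℝ) (𝒯 : Set (Fin n → Fin m → ℝ))
    (T' : Fin n → Fin m → ℝ) : Prop :=
  T' ∈ 𝒯 ∧ supp2 T' ⊆ supp2 S ∧ ∀ T ∈ 𝒯, supp2 T ⊆ supp2 S → D2 T' S ≤ D2 T S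

noncomputable def prodDist {n m : ℕ} (P : Fin n → ℝ) (Q : Fin m → ℝ) :
    Fin n → Fin m → ℝ := fun i j => P i * Q j

/-- KL divergence of univariate distributions. -/
noncomputable def Dv {n : ℕ} (P Q : Fin n → ℝ) : ℝ :=
  ∑ i, P i * Real.log (P i / Q i)

def GeomEquiv {n m : ℕ} (C1 C2 : Set (Fin n → Fin m → ℝ)) : Prop :=
  (∀ S ∈ C1, ∃ T ∈ C2, supp2 T = supp2 S) ∧ (∀ T ∈ C2, ∃ S ∈ C1, supp2 S = supp2 T)


/-!
Write `x` for the I-projection of `s = S` onto the second polytope and `x'` for the I-projection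
of `x` back onto the first. Since `t ↦ t log t` has slope `-∞` at `0`, a minimiser of `D(·‖s)`
over a convex set has the largest support available there; by geometric equivalence this is
`supp s`. Hence `x` can be moved in both directions along `x' - s`, which has zero marginals, and
the first-order condition `∑ (x' - s) log (x / s) = 0` is the Pythagorean identity
`D(x'‖x) = D(x'‖s) + D(s‖x)`. Minimality of `x'` gives `D(x'‖x) ≤ D(s‖x)`, so `D(x'‖s) ≤ 0`
and `x' = s` by Gibbs' inequality.
-/

open Real InformationTheory

lemma convexOn_mul_log_div (s : ℝ) : ConvexOn ℝ (Set.Ici 0) fun x => x * log (x / s) := by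
  rcases eq_or_ne s 0 with rfl | hs
  · simpa using convexOn_const (0 : ℝ) (convex_Ici (0 : ℝ))
  refine (convexOn_mul_log.add
    (((-log s) • LinearMap.id : ℝ →ₗ[ℝ] ℝ).convexOn (convex_Ici 0))).congr fun x _ => ?_
  rcases eq_or_ne x 0 with rfl | hx
  · simp
  · simp [log_div hx hs]; ring

section KL
variable {ι : Type*} [Fintype ι]

noncomputable def klSum (x y : ι → ℝ) : ℝ := ∑ i, x i * log (x i / y i)

def IsKLProj (s : ι → ℝ) (K : Set (ι → ℝ)) (x : ι → ℝ) : Prop :=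
  x ∈ K ∧ supp x ⊆ supp s ∧ ∀ t ∈ K, supp t ⊆ supp s → klSum x s ≤ klSum t s

lemma mul_klFun_div {a b : ℝ} (ha : 0 ≤ a) (hb : 0 ≤ b) (hab : 0 < a → 0 < b) :
    b * klFun (a / b) = a * log (a / b) + b - a := by
  rcases hb.eq_or_lt with rfl | hb
  · simp [le_antisymm (not_lt.1 fun h => (hab h).false) ha]
  · rw [klFun_apply]; field_simp

lemma eq_of_klSum_nonpos {x y : ι → ℝ} (hx : ∀ i, 0 ≤ x i) (hy : ∀ i, 0 ≤ y i)
    (hxy : supp x ⊆ supp y) (hsum : ∑ i, x i = ∑ i, y i) (hkl : klSum x y ≤ 0) : x = y := by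
  have hterm : ∀ i, y i * klFun (x i / y i) = x i * log (x i / y i) + y i - x i :=
    fun i => mul_klFun_div (hx i) (hy i) (@hxy i)
  have hnonneg : ∀ i ∈ univ, 0 ≤ y i * klFun (x i / y i) :=
    fun i _ => mul_nonneg (hy i) (klFun_nonneg (div_nonneg (hx i) (hy i)))
  have hzero : ∑ i, y i * klFun (x i / y i) = 0 := by
    refine le_antisymm ?_ (sum_nonneg hnonneg)
    simp only [hterm, sum_sub_distrib, sum_add_distrib, hsum]
    unfold klSum at hkl; linarith
  funext i
  have hi := (sum_eq_zero_iff_of_nonneg hnonneg).1 hzero i (mem_univ i)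
  rcases (hy i).eq_or_lt with hyi | hyi
  · rw [← hyi]
    exact le_antisymm (not_lt.1 fun h => (show 0 < y i from hxy h).ne' hyi.symm) (hx i)
  · have := (klFun_eq_zero_iff (div_nonneg (hx i) hyi.le)).1
      ((mul_eq_zero.1 hi).resolve_left hyi.ne')
    exact (div_eq_one_iff_eq hyi.ne').1 this

lemma klSum_convexComb_le {x t s : ι → ℝ} (hx : ∀ i, 0 ≤ x i) (ht : ∀ i, 0 ≤ t i) {p : ι}
    (hxp : x p = 0) (hsp : s p ≠ 0) {ε : ℝ} (hε₀ : 0 < ε) (hε₁ : ε ≤ 1) :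
    klSum ((1 - ε) • x + ε • t) s
      ≤ (1 - ε) * klSum x s + ε * klSum t s + ε * (t p * log ε) := by
  classical
  have hterm : ∀ i, ((1 - ε) * x i + ε * t i) * log (((1 - ε) * x i + ε * t i) / s i)
      ≤ (1 - ε) * (x i * log (x i / s i)) + ε * (t i * log (t i / s i))
        + if i = p then ε * (t p * log ε) else 0 := by
    intro i
    split_ifs with hi
    · subst hi
      rcases eq_or_ne (t i) 0 with hti | hti
      · simp [hxp, hti]
      · rw [hxp, mul_zero, zero_add, mul_div_assoc, log_mul hε₀.ne' (div_ne_zero hti hsp)]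
        simp only [mul_zero, zero_mul, zero_add]
        exact le_of_eq (by ring)
    · simpa [smul_eq_mul] using (convexOn_mul_log_div (s i)).2 (Set.mem_Ici.2 (hx i))
        (Set.mem_Ici.2 (ht i)) (sub_nonneg.2 hε₁) hε₀.le (by ring)
  unfold klSum
  calc _ ≤ ∑ i, ((1 - ε) * (x i * log (x i / s i)) + ε * (t i * log (t i / s i))
        + if i = p then ε * (t p * log ε) else 0) := sum_le_sum fun i _ => by simpa using hterm i
    _ = _ := by simp only [sum_add_distrib, sum_ite_eq', mem_univ, if_true, mul_sum]

lemma supp_subset_of_isKLProj {s x t : ι → ℝ} {K : Set (ι → ℝ)} (hK : Convex ℝ K)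
    (hx : IsKLProj s K x) (hx0 : ∀ i, 0 ≤ x i) (ht : t ∈ K) (ht0 : ∀ i, 0 ≤ t i)
    (hts : supp t ⊆ supp s) : supp t ⊆ supp x := by
  intro p (hp : 0 < t p)
  by_contra hxp
  have hxp : x p = 0 := (not_lt.1 hxp).antisymm (hx0 p)
  have hbound : ∀ ε ∈ Set.Ioc (0 : ℝ) 1, 0 ≤ klSum t s - klSum x s + t p * log ε := by
    rintro ε ⟨hε₀, hε₁⟩
    have hmem : (1 - ε) • x + ε • t ∈ K := hK hx.1 ht (by linarith) hε₀.le (by ring)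
    have hsupp : supp ((1 - ε) • x + ε • t) ⊆ supp s := by
      intro q (hq : 0 < (1 - ε) * x q + ε * t q)
      by_contra hqs
      have hxq : x q ≤ 0 := not_lt.1 fun h => hqs (hx.2.1 h)
      have htq : t q ≤ 0 := not_lt.1 fun h => hqs (hts h)
      nlinarith
    have hmin := hx.2.2 _ hmem hsupp
    have hle := klSum_convexComb_le hx0 ht0 hxp (hts hp).ne' hε₀ hε₁
    exact (mul_nonneg_iff_of_pos_left hε₀).1 (by linarith)
  have hlim : Tendsto (fun ε => klSum t s - klSum x s + t p * log ε) (𝓝[>] 0) atBot :=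
    tendsto_atBot_add_const_left _ _ (tendsto_log_nhdsGT_zero.const_mul_atBot hp)
  obtain ⟨ε, hneg, hε⟩ :=
    ((hlim.eventually (eventually_lt_atBot 0)).and (Ioc_mem_nhdsGT zero_lt_one)).exists
  exact (hbound ε hε).not_gt hneg

lemma hasDerivAt_mul_log_div_line {a u s : ℝ} (h : u = 0 ∨ 0 < a ∧ s ≠ 0) :
    HasDerivAt (fun ε => (a + ε * u) * log ((a + ε * u) / s)) (u * (log (a / s) + 1)) 0 := by
  rcases h with rfl | ⟨ha, hs⟩
  · simpa using hasDerivAt_const (0 : ℝ) (a * log (a / s))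
  have hg : HasDerivAt (fun y => y * log (y / s)) (log (a / s) + 1) a := by
    refine ((hasDerivAt_id' a).fun_mul (((hasDerivAt_id' a).div_const s).log
      (div_ne_zero ha.ne' hs))).congr_deriv ?_
    field_simp
  have hf : HasDerivAt (fun ε => a + ε * u) u 0 := by
    simpa using ((hasDerivAt_id (0 : ℝ)).mul_const u).const_add a
  simpa [Function.comp_def, mul_comm] using hg.comp_of_eq 0 hf (by simp)

lemma sum_mul_log_div_add_one_eq_zero {s x u : ι → ℝ} {K : Set (ι → ℝ)}
    (hx : IsKLProj s K x) (hx0 : ∀ i, 0 ≤ x i) (hu : ∀ i, u i ≠ 0 → 0 < x i)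
    (hK : ∀ ε : ℝ, (∀ i, 0 ≤ x i + ε * u i) → x + ε • u ∈ K) :
    ∑ i, u i * (log (x i / s i) + 1) = 0 := by
  have hnonneg : ∀ᶠ ε in 𝓝 (0 : ℝ), ∀ i, 0 ≤ x i + ε * u i := by
    refine eventually_all.2 fun i => ?_
    rcases eq_or_ne (u i) 0 with hui | hui
    · simp [hui, hx0 i]
    · have hc : ContinuousAt (fun ε => x i + ε * u i) 0 := by fun_prop
      exact (hc.eventually (eventually_gt_nhds (by simpa using hu i hui))).mono fun _ h => h.le
  have hmin : IsLocalMin (fun ε : ℝ => klSum (x + ε • u) s) 0 := by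
    filter_upwards [hnonneg] with ε hε
    rw [zero_smul, add_zero]
    refine hx.2.2 _ (hK ε hε) fun i (hi : 0 < x i + ε * u i) => ?_
    rcases eq_or_ne (u i) 0 with hui | hui
    · exact hx.2.1 (show 0 < x i by simpa [hui] using hi)
    · exact hx.2.1 (hu i hui)
  have hderiv : HasDerivAt (fun ε : ℝ => klSum (x + ε • u) s)
      (∑ i, u i * (log (x i / s i) + 1)) 0 := by
    unfold klSum
    simp only [Pi.add_apply, Pi.smul_apply, smul_eq_mul]
    refine HasDerivAt.fun_sum fun i _ => hasDerivAt_mul_log_div_line ?_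
    rcases eq_or_ne (u i) 0 with hui | hui
    · exact Or.inl hui
    · exact Or.inr ⟨hu i hui, (hx.2.1 (hu i hui)).ne'⟩
  exact hmin.hasDerivAt_eq_zero hderiv

lemma klSum_self (s : ι → ℝ) : klSum s s = 0 :=
  sum_eq_zero fun i _ => by rcases eq_or_ne (s i) 0 with h | h <;> simp [h]

lemma klSum_eq_klSum_sub {s x y : ι → ℝ} (hy : ∀ i, 0 ≤ y i) (hyx : supp y ⊆ supp x)
    (hxs : supp x ⊆ supp s) : klSum y x = klSum y s - ∑ i, y i * log (x i / s i) := by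
  unfold klSum
  rw [← sum_sub_distrib]
  refine sum_congr rfl fun i _ => ?_
  rcases (hy i).eq_or_lt with h | (h : i ∈ supp y)
  · simp [← h]
  · have hx : 0 < x i := hyx h
    have hs : 0 < s i := hxs hx
    rw [log_div h.ne' hx.ne', log_div h.ne' hs.ne', log_div hx.ne' hs.ne']
    ring

theorem eq_of_isKLProj_of_isKLProj {s x x' : ι → ℝ} {K₁ K₂ : Set (ι → ℝ)}
    (hK₁ : ∀ y ∈ K₁, ∀ i, 0 ≤ y i) (hK₂ : ∀ y ∈ K₂, ∀ i, 0 ≤ y i) (hconv : Convex ℝ K₂)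
    (htrans : ∀ w ∈ K₂, ∀ y ∈ K₁, ∀ z ∈ K₁, ∀ ε : ℝ,
      (∀ i, 0 ≤ w i + ε * (y i - z i)) → w + ε • (y - z) ∈ K₂)
    (hsum : ∀ y ∈ K₁, ∀ z ∈ K₁, ∑ i, y i = ∑ i, z i)
    (hs : s ∈ K₁) (ht : ∃ t ∈ K₂, supp t = supp s)
    (hx : IsKLProj s K₂ x) (hx' : IsKLProj x K₁ x') : x' = s := by
  obtain ⟨t, ht, hts⟩ := ht
  have hx0 := hK₂ x hx.1
  have hxs : supp x = supp s := hx.2.1.antisymm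
    (hts ▸ supp_subset_of_isKLProj hconv hx hx0 ht (hK₂ t ht) hts.le)
  have hu : ∀ i, x' i - s i ≠ 0 → 0 < x i := by
    intro i hi
    by_contra hxi
    have hs0 : s i ≤ 0 := not_lt.1 fun h => hxi (hxs.ge h)
    have hx'0 : x' i ≤ 0 := not_lt.1 fun h => hxi (hx'.2.1 h)
    exact hi (by linarith [hK₁ s hs i, hK₁ x' hx'.1 i])
  have hfirst := sum_mul_log_div_add_one_eq_zero hx hx0 hu
    fun ε hε => htrans x hx.1 x' hx'.1 s hs ε hε
  have hcross : ∑ i, x' i * log (x i / s i) = ∑ i, s i * log (x i / s i) := by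
    simp only [sub_mul, mul_add, mul_one, sum_sub_distrib, sum_add_distrib,
      hsum x' hx'.1 s hs] at hfirst
    linarith
  have hle : klSum x' x ≤ klSum s x := hx'.2.2 s hs hxs.ge
  rw [klSum_eq_klSum_sub (hK₁ x' hx'.1) hx'.2.1 hx.2.1,
    klSum_eq_klSum_sub (hK₁ s hs) hxs.ge hx.2.1, klSum_self, hcross] at hle
  exact eq_of_klSum_nonpos (hK₁ x' hx'.1) (hK₁ s hs) (hxs ▸ hx'.2.1) (hsum x' hx'.1 s hs)
    (by linarith)

end KL

section Coupling
variable {n m : ℕ}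

lemma convex_coupling (P : Fin n → ℝ) (Q : Fin m → ℝ) : Convex ℝ (Coupling P Q) := by
  rintro x ⟨hx0, hxP, hxQ⟩ y ⟨hy0, hyP, hyQ⟩ a b ha hb hab
  refine ⟨fun i j => ?_, fun i => ?_, fun j => ?_⟩
  · simpa using add_nonneg (mul_nonneg ha (hx0 i j)) (mul_nonneg hb (hy0 i j))
  · simp [sum_add_distrib, ← mul_sum, hxP, hyP, ← add_mul, hab]
  · simp [sum_add_distrib, ← mul_sum, hxQ, hyQ, ← add_mul, hab]

lemma add_smul_sub_mem_coupling {P₁ P₂ : Fin n → ℝ} {Q₁ Q₂ : Fin m → ℝ} {W Y Z : Fin n → Fin m → ℝ}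
    (hW : W ∈ Coupling P₂ Q₂) (hY : Y ∈ Coupling P₁ Q₁) (hZ : Z ∈ Coupling P₁ Q₁) {ε : ℝ}
    (h0 : ∀ i j, 0 ≤ W i j + ε * (Y i j - Z i j)) : W + ε • (Y - Z) ∈ Coupling P₂ Q₂ := by
  refine ⟨h0, fun i => ?_, fun j => ?_⟩
  · simp [sum_add_distrib, ← mul_sum, hW.2.1, hY.2.1, hZ.2.1]
  · simp [sum_add_distrib, ← mul_sum, hW.2.2, hY.2.2, hZ.2.2]

lemma sum_eq_of_curry_mem_coupling {P : Fin n → ℝ} {Q : Fin m → ℝ} {y : Fin n × Fin m → ℝ}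
    (hy : Function.curry y ∈ Coupling P Q) : ∑ p, y p = ∑ i, P i := by
  rw [Fintype.sum_prod_type]
  exact sum_congr rfl fun i _ => hy.2.1 i

lemma D2_eq_klSum (T S : Fin n → Fin m → ℝ) :
    D2 T S = klSum (Function.uncurry T) (Function.uncurry S) :=
  (Fintype.sum_prod_type' _).symm

lemma IsIProj.uncurry {S T : Fin n → Fin m → ℝ} {𝒯 : Set (Fin n → Fin m → ℝ)}
    (h : IsIProj S 𝒯 T) :
    IsKLProj (Function.uncurry S) (Function.curry ⁻¹' 𝒯) (Function.uncurry T) :=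
  ⟨h.1, h.2.1, fun t ht hts => by
    simpa only [D2_eq_klSum, Function.uncurry_curry] using h.2.2 (Function.curry t) ht hts⟩

end Coupling

theorem stmt17_general {n m : ℕ} (P₁ P₂ : Fin n → ℝ) (Q₁ Q₂ : Fin m → ℝ)
    (hGE : GeomEquiv (Coupling P₁ Q₁) (Coupling P₂ Q₂))
    (S Sstar S' : Fin n → Fin m → ℝ) (hS : S ∈ Coupling P₁ Q₁)
    (h12 : IsIProj S (Coupling P₂ Q₂) Sstar)
    (h21 : IsIProj Sstar (Coupling P₁ Q₁) S') : S' = S := by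
  obtain ⟨T, hT, hTS⟩ := hGE.1 S hS
  refine Function.uncurry_injective <| eq_of_isKLProj_of_isKLProj
    (K₁ := Function.curry ⁻¹' Coupling P₁ Q₁) (K₂ := Function.curry ⁻¹' Coupling P₂ Q₂)
    (fun y hy p => hy.1 p.1 p.2) (fun y hy p => hy.1 p.1 p.2)
    (fun y hy z hz a b ha hb hab => convex_coupling P₂ Q₂ hy hz ha hb hab)
    (fun w hw y hy z hz ε hε => add_smul_sub_mem_coupling hw hy hz fun i j => hε (i, j))
    (fun y hy z hz => by rw [sum_eq_of_curry_mem_coupling hy, sum_eq_of_curry_mem_coupling hz])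
    hS ⟨Function.uncurry T, hT, hTS⟩ h12.uncurry h21.uncurry

theorem stmt17 {n m : ℕ} (P₁ P₂ : Fin n → ℝ) (Q₁ Q₂ : Fin m → ℝ)
    (hP₁ : IsProbVec P₁) (hQ₁ : IsProbVec Q₁) (hP₂ : IsProbVec P₂) (hQ₂ : IsProbVec Q₂)
    (hGE : GeomEquiv (Coupling P₁ Q₁) (Coupling P₂ Q₂))
    (S Sstar S' : Fin n → Fin m → ℝ) (hS : S ∈ Coupling P₁ Q₁)
    (h12 : IsIProj S (Coupling P₂ Q₂) Sstar)
    (h21 : IsIProj Sstar (Coupling P₁ Q₁) S') : S' = S :=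
  stmt17_general P₁ P₂ Q₁ Q₂ hGE S Sstar S' hS h12 h21
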